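/- If exactly one sample n activates neuron i (i.e., γ_i^m = 0 for all m ≠ n and γ_i^n ≠ 0), then the ratio of the batch weight gradient to the batch bias gradient at neuron i exactly recovers the activation h_n of that sample. -/

import Mathlib

open Finset in
/-- If exactly one sample `n` activates neuron `i` (γ_i^m = 0 for m ≠ n and
γ_i^n ≠ 0), then the gradient ratio exactly recovers the activation `h n`. -/
theorem linear_layer_leakage_isolated
    (N d : ℕ) (h : Fin N → EuclideanSpace ℝ (Fin d)) (γ : Fin N → ℝ)
    (gW : EuclideanSpace ℝ (Fin d)) (gb : ℝ)
    (hgW : gW = ∑ m, γ m • h m)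
    (hgb : gb = ∑ m, γ m)
    (n : Fin N)
    (hzero : ∀ m, m ≠ n → γ m = 0)
    (hn : γ n ≠ 0) :
    gb⁻¹ • gW = h n := by
  have hW : gW = γ n • h n :=
    hgW.trans <| Fintype.sum_eq_single n fun m hm => by rw [hzero m hm, zero_smul]
  have hb : gb = γ n := hgb.trans <| Fintype.sum_eq_single n hzero
  rw [hW, hb, inv_smul_smul₀ hn]
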